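/- arXiv:2302.01145 — 3 statements merged into one kernel-verified Lean document; each statement's English description precedes it below -/
import Mathlib

section
/- Let p1, ..., pn be distinct odd primes and define h i (x) = −1 if x ≡ −1 (mod p i) and 0 otherwise, and f(x) = ∑ i, h i (x). Then f((∏ i, p i) − 1) = −n, and for any integer x encoding a Boolean assignment (i.e., x ≡ 0 or 1 mod p i for every i), f(x) = 0. -/
open Classical in
theorem loss_threshold (n : ℕ) (p : Fin n → ℕ)
    (hinj : Function.Injective p)
    (hprime : ∀ i, (p i).Prime) (hodd : ∀ i, 2 < p i)
    (h : Fin n → ℤ → ℤ)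
    (hdef : ∀ i x, h i x = if x ≡ -1 [ZMOD (p i)] then (-1 : ℤ) else 0) :
    (∑ i, h i ((∏ j, (p j : ℤ)) - 1)) = -(n : ℤ) ∧
    ∀ x : ℤ, (∀ i, x ≡ 0 [ZMOD (p i)] ∨ x ≡ 1 [ZMOD (p i)]) →
      (∑ i, h i x) = 0 := by
  constructor
  · have hterm : ∀ i, h i ((∏ j, (p j : ℤ)) - 1) = -1 := by
      intro i
      rw [hdef]
      have hdvd : (p i : ℤ) ∣ ∏ j, (p j : ℤ) := Finset.dvd_prod_of_mem _ (Finset.mem_univ i)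
      have : (∏ j, (p j : ℤ)) - 1 ≡ 0 - 1 [ZMOD (p i)] :=
        Int.ModEq.sub (Int.modEq_zero_iff_dvd.mpr hdvd) Int.ModEq.rfl
      simpa using this
    simp [hterm]
  · intro x hx
    have hterm : ∀ i, h i x = 0 := by
      intro i
      rw [hdef]
      have hne : ¬ x ≡ -1 [ZMOD (p i)] := by
        intro hcon
        rcases hx i with h0 | h1
        · have : (p i : ℤ) ∣ 1 := by
            have := (h0.symm.trans hcon).dvd
            simpa using this.neg_right
          have := Int.le_of_dvd one_pos this
          have := hodd i
          omega
        · have : (p i : ℤ) ∣ 2 := by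
            have := (h1.symm.trans hcon).dvd
            have : (p i : ℤ) ∣ (-1 - 1) := this
            simpa using this.neg_right
          have := Int.le_of_dvd (by norm_num) this
          have := hodd i
          omega
      simp [hne]
    simp [hterm]
end

section
/- Let φ be a Boolean assignment to n variables, encoded via CRT as an integer x with x ≡ (if φ i then 1 else 0) (mod p i) for distinct odd primes p i. A 3CNF clause C with literals on variables i, j, k is satisfied by φ if and only if g_C(x) = 1, where g_C(x) = 1 exactly when x ≡ 1 (mod p_v) for some positive literal v of C or x ≡ 0 (mod p_v) for some negative literal v of C. -/
theorem clause_gadget_correct (n : ℕ) (p : Fin n → ℕ)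
    (hinj : Function.Injective p)
    (hprime : ∀ i, (p i).Prime) (hodd : ∀ i, 2 < p i)
    (φ : Fin n → Bool) (x : ℤ)
    (hx : ∀ i, x ≡ (if φ i then 1 else 0) [ZMOD (p i)])
    (i j k : Fin n) (bi bj bk : Bool)
    (hij : i ≠ j) (hik : i ≠ k) (hjk : j ≠ k) :
    (φ i = bi ∨ φ j = bj ∨ φ k = bk) ↔
    (x ≡ (if bi then 1 else 0) [ZMOD (p i)] ∨
     x ≡ (if bj then 1 else 0) [ZMOD (p j)] ∨
     x ≡ (if bk then 1 else 0) [ZMOD (p k)]) := by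
  have key : ∀ (v : Fin n) (b : Bool),
      (φ v = b) ↔ x ≡ (if b then 1 else 0) [ZMOD (p v)] := by
    intro v b
    constructor
    · intro h; simpa [h] using hx v
    · intro h
      by_contra hne
      have h2 := (hx v).symm.trans h
      have hcon : ((0 : ℤ) ≡ 1 [ZMOD (p v)]) := by
        cases b <;> cases hb : φ v <;> simp [hb] at hne h2 ⊢
        · exact h2.symm
        · exact h2
      have := Int.ModEq.dvd hcon
      simp at this
      have := Int.le_of_dvd one_pos this
      have := hodd v
      omega
  rw [key i bi, key j bj, key k bk]
end

section
/- With the setup of the CRT clause encoding: a 3CNF formula F with m clauses is satisfiable if and only if there exists an integer x with 0 ≤ x < ∏ i, p i such that ∑_{C ∈ F} g_C(x) ≥ m, where the sum is over clause indicator functions g_C defined by congruences modulo the odd primes assigned to the clause's variables. -/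
/-- A 3CNF clause: three (variable index, polarity) pairs. -/
def Clause (n : ℕ) := (Fin n × Bool) × (Fin n × Bool) × (Fin n × Bool)

/-- A clause is satisfied by an assignment `φ` when some literal is satisfied. -/
def ClauseSat {n : ℕ} (φ : Fin n → Bool) (C : Clause n) : Prop :=
  φ C.1.1 = C.1.2 ∨ φ C.2.1.1 = C.2.1.2 ∨ φ C.2.2.1 = C.2.2.2

open Classical in
/-- The clause indicator function defined via congruences modulo the primes
assigned to the clause's variables. -/
noncomputable def gC {n : ℕ} (p : Fin n → ℕ) (C : Clause n) (x : ℤ) : ℤ :=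
  if (x ≡ (if C.1.2 then 1 else 0) [ZMOD (p C.1.1)] ∨
      x ≡ (if C.2.1.2 then 1 else 0) [ZMOD (p C.2.1.1)] ∨
      x ≡ (if C.2.2.2 then 1 else 0) [ZMOD (p C.2.2.1)]) then 1 else 0

/-!
An assignment `φ` is encoded by any `x` with `x ≡ φ i (mod p i)` for all `i`; by the Chinese
remainder theorem such an `x` exists in `[0, ∏ i, p i)`, and `g_C(x) = 1` for every clause
satisfied by `φ`. Conversely, each `g_C` is at most `1`, so a sum reaching the number of clauses
forces `g_C(x) = 1` for all `C`. Reading off `φ i := (x ≡ 1 mod p i)` then satisfies every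
clause: a literal congruence `x ≡ b (mod p i)` forces `φ i = b`, because `0 ≢ 1 (mod p i)`.
-/

open Function

theorem List.length_le_sum_map_iff {α : Type*} {l : List α} {f : α → ℤ}
    (hf : ∀ a ∈ l, f a ≤ 1) : (l.length : ℤ) ≤ (l.map f).sum ↔ ∀ a ∈ l, f a = 1 := by
  induction l with
  | nil => simp
  | cons a l ih =>
    have hf' : ∀ b ∈ l, f b ≤ 1 := fun b hb => hf b (.tail _ hb)
    have hsum : (l.map f).sum ≤ l.length := by
      simpa using List.sum_le_card_nsmul (l.map f) 1 (by simpa using hf')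
    have ha := hf a List.mem_cons_self
    rw [List.forall_mem_cons, ← ih hf']
    simp only [List.map_cons, List.sum_cons, List.length_cons]
    push_cast
    constructor <;> intro h <;> omega

theorem exists_nonneg_lt_prod_modEq {ι : Type*} [Fintype ι] {s : ι → ℕ} (hs : ∀ i, s i ≠ 0)
    (hcop : Pairwise (Nat.Coprime on s)) (a : ι → ℕ) :
    ∃ x : ℤ, 0 ≤ x ∧ x < ∏ i, (s i : ℤ) ∧ ∀ i, x ≡ a i [ZMOD s i] := by
  let k := Nat.chineseRemainderOfFinset a s Finset.univ (fun i _ => hs i)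
    (fun _ _ _ _ hij => hcop hij)
  refine ⟨k, by positivity, ?_, fun i => Int.natCast_modEq_iff.2 (k.2 i (Finset.mem_univ i))⟩
  exact_mod_cast Nat.chineseRemainderOfFinset_lt_prod a s _ _

theorem decide_intCast_eq_one_of_modEq {m : ℕ} (hm : 1 < m) {x : ℤ} {b : Bool}
    (h : x ≡ (if b then 1 else 0) [ZMOD m]) : decide ((x : ZMod m) = 1) = b := by
  have : Fact (1 < m) := ⟨hm⟩
  rw [← ZMod.intCast_eq_intCast_iff] at h
  cases b <;> simp_all

section Indicator

variable {n : ℕ} (p : Fin n → ℕ) (C : Clause n) (x : ℤ)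

theorem gC_le_one : gC p C x ≤ 1 := by
  unfold gC
  split_ifs <;> norm_num

theorem gC_eq_one_of_clauseSat {φ : Fin n → Bool}
    (hx : ∀ i, x ≡ (if φ i then 1 else 0) [ZMOD p i]) (hC : ClauseSat φ C) : gC p C x = 1 := by
  unfold gC
  rw [if_pos]
  rcases hC with h | h | h <;> simp only [← h, hx, true_or, or_true]

theorem clauseSat_of_gC_eq_one (hp : ∀ i, 1 < p i) (h : gC p C x = 1) :
    ClauseSat (fun i => decide ((x : ZMod (p i)) = 1)) C := by
  rw [gC, ite_eq_left_iff, not_imp_comm] at h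
  exact (h zero_ne_one).imp (decide_intCast_eq_one_of_modEq (hp _))
    (Or.imp (decide_intCast_eq_one_of_modEq (hp _)) (decide_intCast_eq_one_of_modEq (hp _)))

end Indicator

theorem sat_iff_sum_threshold_general (n : ℕ) (p : Fin n → ℕ)
    (hinj : Function.Injective p)
    (hprime : ∀ i, (p i).Prime)
    (F : List (Clause n)) :
    (∃ φ : Fin n → Bool, ∀ C ∈ F, ClauseSat φ C) ↔
    (∃ x : ℤ, 0 ≤ x ∧ x < ∏ i, (p i : ℤ) ∧
      (F.length : ℤ) ≤ (F.map (fun C => gC p C x)).sum) := by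
  have hsum_iff (x : ℤ) := List.length_le_sum_map_iff (l := F) fun C _ => gC_le_one p C x
  constructor
  · rintro ⟨φ, hφ⟩
    have hcop : Pairwise (Nat.Coprime on p) := fun i j hij =>
      (Nat.coprime_primes (hprime i) (hprime j)).2 (hinj.ne hij)
    obtain ⟨x, hx0, hxN, hx⟩ := exists_nonneg_lt_prod_modEq (fun i => (hprime i).ne_zero) hcop
      (fun i => if φ i then 1 else 0)
    refine ⟨x, hx0, hxN, (hsum_iff x).2 fun C hC => ?_⟩
    exact gC_eq_one_of_clauseSat p C x (fun i => by simpa using hx i) (hφ C hC)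
  · rintro ⟨x, -, -, hsum⟩
    exact ⟨_, fun C hC =>
      clauseSat_of_gC_eq_one p C x (fun i => (hprime i).one_lt) ((hsum_iff x).1 hsum C hC)⟩

theorem sat_iff_sum_threshold (n : ℕ) (p : Fin n → ℕ)
    (hinj : Function.Injective p)
    (hprime : ∀ i, (p i).Prime) (hodd : ∀ i, 2 < p i)
    (F : List (Clause n))
    (hdistinct : ∀ C ∈ F, C.1.1 ≠ C.2.1.1 ∧ C.1.1 ≠ C.2.2.1 ∧ C.2.1.1 ≠ C.2.2.1) :
    (∃ φ : Fin n → Bool, ∀ C ∈ F, ClauseSat φ C) ↔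
    (∃ x : ℤ, 0 ≤ x ∧ x < ∏ i, (p i : ℤ) ∧
      (F.length : ℤ) ≤ (F.map (fun C => gC p C x)).sum) :=
  sat_iff_sum_threshold_general n p hinj hprime F
end
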